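/- Let u, v be nodes on level i of the pruned run DAG G' and u', v' nodes on level i+1 of G'. If (u,u') ∈ E', (v,v') ∈ E', and u' ≈_{i+1} v' (i.e., h_{u'} = h_{v'}), then u ≈_i v (i.e., h_u = h_v). -/

import Mathlib

/-!
Profile trees for Büchi determinization (Fisman–Kupferman–Vardi–Wilke style profiles).
Common definitions: nondeterministic Büchi word automata (NBW), the run DAG `G`,
profiles of nodes, and the pruned run DAG `G'`.
-/

/-- A nondeterministic Büchi word automaton `A = (Alph, Q, Qin, ρ, F)` with `Qin ∩ F = ∅`. -/
structure NBW (Alph Q : Type*) where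
  Qin : Set Q
  ρ : Q → Alph → Set Q
  F : Set Q
  disj : Qin ∩ F = ∅

variable {Alph Q : Type*} (A : NBW Alph Q) (w : ℕ → Alph)

/-- Lexicographic order `L₁ ≤ L₂` on profiles (lists over ℕ). -/
def lexLE (L₁ L₂ : List ℕ) : Prop :=
  List.Lex (· < ·) L₁ L₂ ∨ L₁ = L₂

/-- Strict lexicographic order `L₁ < L₂` on profiles. -/
def lexLT (L₁ L₂ : List ℕ) : Prop :=
  List.Lex (· < ·) L₁ L₂

open Classical in
/-- The profiles of all finite initial runs of `A` (on `w`) to the node `v = (q, i)`: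
for each run `p₀,…,p_i` with `p₀ ∈ Qin`, `p_{j+1} ∈ ρ(p_j, w_j)` and `p_i = q`, the
sequence of `F`-visitation labels `f(p₀,0) ⋯ f(p_i,i)` (where `f` is 1 on `F`-nodes, else 0). -/
def runProfiles (v : Q × ℕ) : Set (List ℕ) :=
  { L | ∃ p : ℕ → Q, p 0 ∈ A.Qin ∧ (∀ j < v.2, p (j + 1) ∈ A.ρ (p j) (w j)) ∧
        p v.2 = v.1 ∧ L = (List.range (v.2 + 1)).map (fun j => if p j ∈ A.F then 1 else 0) }

/-- `v` is a node of the run DAG `G = (V, E)` (equivalently of the pruned DAG `G'`):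
there is a finite run of `A` to `v.1` on `w₀ ⋯ w_{v.2 - 1}`. -/
def memV (v : Q × ℕ) : Prop := (runProfiles A w v).Nonempty

/-- `L` is the lexicographically maximal profile among all initial paths to `v`. -/
def IsMaxProfile (v : Q × ℕ) (L : List ℕ) : Prop :=
  L ∈ runProfiles A w v ∧ ∀ L' ∈ runProfiles A w v, lexLE L' L

open Classical in
/-- The profile `h_v` of a node `v`: the lexicographically maximal profile of an
initial path to `v` (junk value `[]` if `v` is not a node of the DAG). -/
noncomputable def profile (v : Q × ℕ) : List ℕ :=
  if h : ∃ L, IsMaxProfile A w v L then h.choose else []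

/-- The edge relation `E` of the run DAG `G`: `E((q,i), (q',i+1))` iff `(q,i) ∈ V`
and `q' ∈ ρ(q, w_i)`. -/
def edgeG (u v : Q × ℕ) : Prop :=
  memV A w u ∧ v.2 = u.2 + 1 ∧ v.1 ∈ A.ρ u.1 (w u.2)

/-- The edge relation `E'` of the pruned run DAG `G'`: `(u,v) ∈ E` and every
`E`-parent `u'` of `v` satisfies `h_{u'} ≤ h_u`. -/
def edgeG' (u v : Q × ℕ) : Prop :=
  edgeG A w u v ∧ ∀ u', edgeG A w u' v → lexLE (profile A w u') (profile A w u)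

/-!
For an edge `(u, u')` of the pruned DAG, `h_{u'} = h_u · f(u')`: appending `f(u')` to a best
run to `u` gives a run to `u'`, and any run to `u'` passes through some `E`-parent `u''` of `u'`,
so its profile is at most `h_{u''} · f(u') ≤ h_u · f(u')`, because pruning keeps only edges from
parents of maximal profile and appending the same letter to lists of equal length preserves the
lexicographic order. Cancelling the last letter gives the theorem.
-/

theorem lexLE_iff_le {L₁ L₂ : List ℕ} : lexLE L₁ L₂ ↔ L₁ ≤ L₂ := by
  rw [lexLE, le_iff_lt_or_eq]
  rfl

theorem List.Lex.append_of_length_eq {α : Type*} {r : α → α → Prop} {K M : List α}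
    (h : List.Lex r K M) (hlen : K.length = M.length) (T T' : List α) :
    List.Lex r (K ++ T) (M ++ T') := by
  induction h with
  | nil => simp at hlen
  | rel hab => exact List.Lex.rel hab
  | cons _ ih => exact List.Lex.cons (ih (by simpa using hlen))

theorem List.append_le_append_of_length_eq {α : Type*} [LinearOrder α] {K M : List α}
    (h : K ≤ M) (hlen : K.length = M.length) (T : List α) : K ++ T ≤ M ++ T := by
  rcases h.lt_or_eq with hlt | rfl
  · exact le_of_lt (List.Lex.append_of_length_eq hlt hlen T T)
  · exact le_rfl

namespace NBW

open Classical in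
noncomputable def acceptBit (q : Q) : ℕ := if q ∈ A.F then 1 else 0

noncomputable def runLabels (p : ℕ → Q) (n : ℕ) : List ℕ :=
  (List.range (n + 1)).map (fun j => A.acceptBit (p j))

theorem runLabels_succ (p : ℕ → Q) (n : ℕ) :
    A.runLabels p (n + 1) = A.runLabels p n ++ [A.acceptBit (p (n + 1))] := by
  simp only [runLabels, List.range_succ, List.map_append, List.map_singleton]

theorem runLabels_congr {p p' : ℕ → Q} {n : ℕ} (h : ∀ j ≤ n, p j = p' j) :
    A.runLabels p n = A.runLabels p' n :=
  List.map_congr_left fun j hj => by rw [h j (Nat.lt_succ_iff.mp (List.mem_range.mp hj))]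

theorem length_runLabels (p : ℕ → Q) (n : ℕ) : (A.runLabels p n).length = n + 1 := by
  simp [runLabels]

end NBW

open NBW

section

variable {A w}

theorem length_of_mem_runProfiles {v : Q × ℕ} {L : List ℕ} (h : L ∈ runProfiles A w v) :
    L.length = v.2 + 1 := by
  obtain ⟨p, -, -, -, rfl⟩ := h
  exact A.length_runLabels p v.2

open Classical in
theorem runProfiles_finite (v : Q × ℕ) : (runProfiles A w v).Finite := by
  refine ((List.finite_length_eq Bool (v.2 + 1)).image
    (List.map fun b : Bool => if b then 1 else 0)).subset ?_
  rintro L ⟨p, -, -, -, rfl⟩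
  refine ⟨(List.range (v.2 + 1)).map fun j => decide (p j ∈ A.F), by simp, ?_⟩
  simp only [List.map_map]
  exact List.map_congr_left fun j _ => by simp

theorem isMaxProfile_iff_isGreatest {v : Q × ℕ} {L : List ℕ} :
    IsMaxProfile A w v L ↔ IsGreatest (runProfiles A w v) L := by
  simp only [IsMaxProfile, IsGreatest, upperBounds, lexLE_iff_le, Set.mem_ofPred_eq]

theorem isGreatest_profile {v : Q × ℕ} (hv : memV A w v) :
    IsGreatest (runProfiles A w v) (profile A w v) := by
  have hfin : (runProfiles A w v).Finite := runProfiles_finite v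
  have hne : hfin.toFinset.Nonempty := hfin.toFinset_nonempty.mpr hv
  have hex : ∃ L, IsMaxProfile A w v L :=
    ⟨_, isMaxProfile_iff_isGreatest.mpr (by simpa using hfin.toFinset.isGreatest_max' hne)⟩
  rw [profile, dif_pos hex]
  exact isMaxProfile_iff_isGreatest.mp hex.choose_spec

theorem profile_eq_of_isGreatest {v : Q × ℕ} {L : List ℕ}
    (h : IsGreatest (runProfiles A w v) L) : profile A w v = L :=
  (isGreatest_profile ⟨L, h.1⟩).unique h

theorem append_acceptBit_mem_runProfiles {q q' : Q} {n : ℕ} {K : List ℕ}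
    (hK : K ∈ runProfiles A w (q, n)) (hq' : q' ∈ A.ρ q (w n)) :
    K ++ [A.acceptBit q'] ∈ runProfiles A w (q', n + 1) := by
  obtain ⟨p, hp0, hstep, hpn : p n = q, rfl⟩ := hK
  have hagree : ∀ j ≤ n, Function.update p (n + 1) q' j = p j := fun j hj =>
    Function.update_of_ne (by omega) _ _
  refine ⟨Function.update p (n + 1) q', by rwa [hagree 0 (Nat.zero_le n)], fun j hj => ?_,
    Function.update_self _ _ _, ?_⟩
  · rw [hagree j (by omega)]
    rcases Nat.lt_succ_iff_lt_or_eq.mp hj with hj | rfl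
    · rw [hagree (j + 1) hj]
      exact hstep j hj
    · rw [Function.update_self]
      simpa [← hpn] using hq'
  · change _ = A.runLabels _ (n + 1)
    rw [A.runLabels_succ, Function.update_self, A.runLabels_congr hagree]
    rfl

theorem exists_parent_of_mem_runProfiles {q' : Q} {n : ℕ} {L : List ℕ}
    (hL : L ∈ runProfiles A w (q', n + 1)) :
    ∃ q, q' ∈ A.ρ q (w n) ∧ ∃ K ∈ runProfiles A w (q, n), L = K ++ [A.acceptBit q'] := by
  obtain ⟨p, hp0, hstep, hpn : p (n + 1) = q', rfl⟩ := hL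
  refine ⟨p n, ?_, A.runLabels p n, ⟨p, hp0, fun j hj => hstep j (by omega), rfl, rfl⟩, ?_⟩
  · simpa [← hpn] using hstep n n.lt_succ_self
  · change A.runLabels p (n + 1) = _
    rw [A.runLabels_succ]
    rw [hpn]

theorem profile_of_edgeG' {u u' : Q × ℕ} (he : edgeG' A w u u') :
    profile A w u' = profile A w u ++ [A.acceptBit u'.1] := by
  obtain ⟨⟨hu, hlevel, hρ⟩, hpruned⟩ := he
  obtain ⟨q', n⟩ := u'
  obtain rfl : n = u.2 + 1 := hlevel
  have hmax := isGreatest_profile hu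
  refine profile_eq_of_isGreatest ⟨append_acceptBit_mem_runProfiles hmax.1 hρ, ?_⟩
  rintro L hL
  obtain ⟨q, hq, K, hK, rfl⟩ := exists_parent_of_mem_runProfiles hL
  have hK_le : K ≤ profile A w (q, u.2) := (isGreatest_profile ⟨K, hK⟩).2 hK
  have hparent_le : profile A w (q, u.2) ≤ profile A w u :=
    lexLE_iff_le.mp (hpruned (q, u.2) ⟨⟨K, hK⟩, rfl, hq⟩)
  refine List.append_le_append_of_length_eq (hK_le.trans hparent_le) ?_ _
  rw [length_of_mem_runProfiles hK, length_of_mem_runProfiles hmax.1]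

end

theorem parents_equiv_of_children_equiv_general
    (A : NBW Alph Q) (w : ℕ → Alph) (u v u' v' : Q × ℕ)
    (he : edgeG' A w u u') (he' : edgeG' A w v v')
    (heq : profile A w u' = profile A w v') :
    profile A w u = profile A w v := by
  rw [profile_of_edgeG' he, profile_of_edgeG' he'] at heq
  exact List.append_inj_left' heq rfl

/-- Lemma: equivalent children have equivalent parents in `G'`.
If `u, v` are nodes on level `i` of `G'`, `u', v'` are nodes on level `i+1`,
`(u,u') ∈ E'`, `(v,v') ∈ E'`, and `h_{u'} = h_{v'}`, then `h_u = h_v`. -/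
theorem parents_equiv_of_children_equiv [Fintype Alph] [Fintype Q]
    (A : NBW Alph Q) (w : ℕ → Alph) (i : ℕ) (u v u' v' : Q × ℕ)
    (hu : memV A w u) (hv : memV A w v) (hu' : memV A w u') (hv' : memV A w v')
    (hui : u.2 = i) (hvi : v.2 = i) (hui' : u'.2 = i + 1) (hvi' : v'.2 = i + 1)
    (he : edgeG' A w u u') (he' : edgeG' A w v v')
    (heq : profile A w u' = profile A w v') :
    profile A w u = profile A w v :=
  parents_equiv_of_children_equiv_general A w u v u' v' he he' heq
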